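/- For any real y > 0 and positive integers a, b, the coefficient [y^a] of (e^y − 1)^b satisfies [y^a] (e^y − 1)^b ≤ C · (yb)^{-1/2} · (e^y − 1)^b / y^a for an absolute constant C (uniform in a, b, y). -/

import Mathlib

/-!
Cauchy's formula on the circle of radius `y` gives
`2π [yᵃ](eʸ - 1)ᵇ yᵃ = ∫_{-π}^{π} (exp (y e^{it}) - 1)ᵇ e^{-iat} dt`.
Writing `e^z - 1 = 2 e^{z/2} sinh (z/2)` and bounding `sinh` by its series gives
`|e^z - 1| ≤ (e^{|z|} - 1) e^{-(|z| - Re z)/2}`, so on the circle the integrand is at most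
`(eʸ - 1)ᵇ e^{-by(1 - cos t)/2} ≤ (eʸ - 1)ᵇ e^{-by t²/π²}`. The Gaussian integral of the
latter is `π √(π / (by))`, which yields the bound with `C = √π / 2`.
-/

open Complex Real Nat

lemma Complex.norm_sinh_le_sinh_norm (z : ℂ) : ‖sinh z‖ ≤ Real.sinh ‖z‖ :=
  (Complex.hasSum_sinh z).norm_le_of_bounded (Real.hasSum_sinh ‖z‖) fun n => by
    simp [norm_pow]

lemma Complex.norm_exp_sub_one_le_mul_exp (z : ℂ) :
    ‖exp z - 1‖ ≤ (Real.exp ‖z‖ - 1) * Real.exp ((z.re - ‖z‖) / 2) := by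
  have hsplit : exp z - 1 = 2 * exp (z / 2) * sinh (z / 2) := by
    rw [mul_right_comm, two_sinh, sub_mul, ← Complex.exp_add, ← Complex.exp_add, add_halves,
      neg_add_cancel, Complex.exp_zero]
  have hsinh : 2 * Real.sinh (‖z‖ / 2) = Real.exp (‖z‖ / 2) - Real.exp (-(‖z‖ / 2)) := by
    rw [Real.sinh_eq]; ring
  calc ‖exp z - 1‖ = 2 * Real.exp (z.re / 2) * ‖sinh (z / 2)‖ := by
        rw [hsplit, norm_mul, norm_mul, norm_exp]; simp
    _ ≤ 2 * Real.exp (z.re / 2) * Real.sinh (‖z‖ / 2) := by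
        gcongr
        simpa using (z / 2).norm_sinh_le_sinh_norm
    _ = (Real.exp ‖z‖ - 1) * Real.exp ((z.re - ‖z‖) / 2) := by
        rw [mul_right_comm, hsinh, sub_mul, sub_mul, one_mul, ← Real.exp_add, ← Real.exp_add,
          ← Real.exp_add]
        ring_nf

lemma integral_exp_int_mul_mul_I_eq_zero {m : ℤ} (hm : m ≠ 0) :
    ∫ t in (-π)..π, exp (m * t * I) = 0 := by
  have hc : (m : ℂ) * I ≠ 0 := mul_ne_zero (Int.cast_ne_zero.mpr hm) I_ne_zero
  have hperiod : exp (m * I * π) = exp (m * I * (-π : ℝ)) := by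
    rw [← mul_one (exp (_ * ((-π : ℝ) : ℂ))), ← exp_int_mul_two_pi_mul_I m, ← Complex.exp_add]
    push_cast; ring_nf
  simp_rw [mul_right_comm _ _ I]
  rw [integral_exp_mul_complex hc, hperiod, sub_self, zero_div]

lemma integral_tsum_mul_exp_mul_I_mul_exp_neg (f : ℕ → ℂ) (hf : Summable fun n => ‖f n‖)
    (a : ℕ) :
    ∫ t in (-π)..π, (∑' n, f n * exp (n * t * I)) * exp (-(a * t * I)) = 2 * π * f a := by
  set F : ℕ → ℝ → ℂ := fun n t => f n * exp (((n - a : ℤ) : ℂ) * t * I)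
  have hF : ∀ t : ℝ, (∑' n, f n * exp (n * t * I)) * exp (-(a * t * I)) = ∑' n, F n t := by
    intro t
    rw [← tsum_mul_right]
    refine tsum_congr fun n => ?_
    rw [mul_assoc, ← Complex.exp_add]
    simp only [F]; push_cast; ring_nf
  have hF_integral : ∀ n, ∫ t in (-π)..π, F n t = if n = a then 2 * π * f a else 0 := by
    intro n
    rw [intervalIntegral.integral_const_mul]
    split_ifs with hn
    · simp [hn]; ring
    · rw [integral_exp_int_mul_mul_I_eq_zero (sub_ne_zero.mpr (by exact_mod_cast hn)), mul_zero]
  have hnorm : ∀ n t, ‖F n t‖ = ‖f n‖ := by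
    intro n t
    simp [F, Complex.norm_exp]
  have hsum : HasSum (fun n => ∫ t in (-π)..π, F n t) (∫ t in (-π)..π, ∑' n, F n t) :=
    intervalIntegral.hasSum_integral_of_dominated_convergence (fun n _ => ‖f n‖)
      (fun n => by fun_prop) (fun n => .of_forall fun t _ => (hnorm n t).le)
      (.of_forall fun _ _ => hf) intervalIntegrable_const
      (.of_forall fun t _ => (hf.of_norm_bounded fun n => (hnorm n t).le).hasSum)
  simp only [hF_integral] at hsum
  simp_rw [hF]
  exact hsum.unique (hasSum_ite_eq a _)

lemma integral_exp_mul_exp_mul_I_mul_exp_neg (c : ℂ) (a : ℕ) :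
    ∫ t in (-π)..π, exp (c * exp (t * I)) * exp (-(a * t * I)) = 2 * π * (c ^ a / a !) := by
  have hexp : ∀ t : ℝ, exp (c * exp (t * I)) = ∑' n, c ^ n / n ! * exp (n * t * I) := by
    intro t
    have hseries := NormedSpace.expSeries_div_hasSum_exp (c * exp (t * I))
    rw [← exp_eq_exp_ℂ] at hseries
    rw [← hseries.tsum_eq]
    refine tsum_congr fun n => ?_
    rw [mul_assoc, Complex.exp_nat_mul, mul_pow]
    ring
  have hsummable : Summable fun n => ‖c ^ n / (n ! : ℂ)‖ := by
    simpa [norm_pow] using Real.summable_pow_div_factorial ‖c‖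
  simp_rw [hexp]
  exact integral_tsum_mul_exp_mul_I_mul_exp_neg _ hsummable a

lemma PowerSeries.coeff_exp_sub_one_pow {K : Type*} [Field K] [CharZero K] (b n : ℕ) :
    coeff n ((exp K - 1) ^ b) =
      ∑ j ∈ Finset.range (b + 1), (-1) ^ (j + b) * b.choose j * (j : K) ^ n / n ! := by
  rw [sub_pow, map_sum]
  refine Finset.sum_congr rfl fun j _ => ?_
  rw [exp_pow_eq_rescale_exp, one_pow, mul_one, ← map_natCast (C (R := K)),
    ← map_one (C (R := K)), ← map_neg, ← map_pow, coeff_mul_C, coeff_C_mul, coeff_rescale,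
    coeff_exp]
  simp [div_eq_mul_inv]
  ring

lemma integral_exp_sub_one_pow_mul_exp_neg (c : ℂ) (a b : ℕ) :
    ∫ t in (-π)..π, (exp (c * exp (t * I)) - 1) ^ b * exp (-(a * t * I)) =
      2 * π * (PowerSeries.coeff (R := ℝ) a ((PowerSeries.exp ℝ - 1) ^ b) : ℂ) * c ^ a := by
  have hexpand : ∀ t : ℝ, (exp (c * exp (t * I)) - 1) ^ b * exp (-(a * t * I)) =
      ∑ j ∈ Finset.range (b + 1), (-1) ^ (j + b) * b.choose j *
        (exp (j * c * exp (t * I)) * exp (-(a * t * I))) := by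
    intro t
    rw [sub_pow, Finset.sum_mul]
    refine Finset.sum_congr rfl fun j _ => ?_
    rw [mul_assoc (j : ℂ), Complex.exp_nat_mul]
    ring
  simp_rw [hexpand]
  rw [intervalIntegral.integral_finsetSum fun j _ => by
    apply Continuous.intervalIntegrable; fun_prop]
  simp_rw [intervalIntegral.integral_const_mul, integral_exp_mul_exp_mul_I_mul_exp_neg,
    PowerSeries.coeff_exp_sub_one_pow]
  push_cast
  rw [Finset.mul_sum, Finset.sum_mul]
  refine Finset.sum_congr rfl fun j _ => ?_
  ring

lemma norm_exp_mul_exp_mul_I_sub_one_le {y t : ℝ} (hy : 0 ≤ y) (ht : |t| ≤ π) :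
    ‖exp (y * exp (t * I)) - 1‖ ≤ (Real.exp y - 1) * Real.exp (-(y / π ^ 2) * t ^ 2) := by
  have hnorm : ‖(y : ℂ) * exp (t * I)‖ = y := by
    rw [norm_mul, norm_exp_ofReal_mul_I, mul_one, norm_real, Real.norm_of_nonneg hy]
  have hre : ((y : ℂ) * exp (t * I)).re = y * Real.cos t := by
    rw [re_ofReal_mul, exp_ofReal_mul_I_re]
  have hcos : y * Real.cos t ≤ y - 2 * (y / π ^ 2 * t ^ 2) := by
    calc y * Real.cos t ≤ y * (1 - 2 / π ^ 2 * t ^ 2) :=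
          mul_le_mul_of_nonneg_left (Real.cos_le_one_sub_mul_cos_sq ht) hy
      _ = y - 2 * (y / π ^ 2 * t ^ 2) := by ring
  refine (norm_exp_sub_one_le_mul_exp _).trans ?_
  rw [hnorm, hre]
  gcongr
  · linarith [Real.add_one_le_exp y]
  · linarith

lemma norm_exp_sub_one_pow_mul_exp_neg_le {y t : ℝ} (hy : 0 ≤ y) (ht : |t| ≤ π) (a b : ℕ) :
    ‖(exp (y * exp (t * I)) - 1) ^ b * exp (-(a * t * I))‖ ≤
      (Real.exp y - 1) ^ b * Real.exp (-(b * y / π ^ 2) * t ^ 2) := by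
  have hphase : ‖exp (-(a * t * I))‖ = 1 := by
    rw [← neg_mul, ← ofReal_natCast, ← ofReal_mul, ← ofReal_neg, norm_exp_ofReal_mul_I]
  calc ‖(exp (y * exp (t * I)) - 1) ^ b * exp (-(a * t * I))‖
      = ‖exp (y * exp (t * I)) - 1‖ ^ b := by rw [norm_mul, hphase, mul_one, norm_pow]
    _ ≤ ((Real.exp y - 1) * Real.exp (-(y / π ^ 2) * t ^ 2)) ^ b := by
        gcongr; exact norm_exp_mul_exp_mul_I_sub_one_le hy ht
    _ = (Real.exp y - 1) ^ b * Real.exp (-(b * y / π ^ 2) * t ^ 2) := by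
        rw [mul_pow, ← Real.exp_nat_mul]; ring_nf

lemma intervalIntegral.integral_exp_neg_mul_sq_le {α : ℝ} (hα : 0 < α) {a b : ℝ} (hab : a ≤ b) :
    ∫ t in a..b, Real.exp (-α * t ^ 2) ≤ √(π / α) := by
  rw [intervalIntegral.integral_of_le hab, ← integral_gaussian α]
  exact MeasureTheory.setIntegral_le_integral (integrable_exp_neg_mul_sq hα)
    (.of_forall fun _ => (Real.exp_pos _).le)

lemma coeff_exp_sub_one_pow_mul_pow_le {a b : ℕ} {y : ℝ} (hb : 0 < b) (hy : 0 < y) :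
    PowerSeries.coeff (R := ℝ) a ((PowerSeries.exp ℝ - 1) ^ b) * y ^ a ≤
      √π / 2 / √(y * b) * (Real.exp y - 1) ^ b := by
  set c := PowerSeries.coeff (R := ℝ) a ((PowerSeries.exp ℝ - 1) ^ b)
  have hα : 0 < b * y / π ^ 2 := by positivity
  have hpi : -π ≤ π := by linarith [pi_pos]
  refine le_of_mul_le_mul_left ?_ (by positivity : (0 : ℝ) < 2 * π)
  calc 2 * π * (c * y ^ a)
      ≤ ‖∫ t in (-π)..π, (exp (y * exp (t * I)) - 1) ^ b * exp (-(a * t * I))‖ := by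
        rw [integral_exp_sub_one_pow_mul_exp_neg, ← ofReal_pow, ← ofReal_ofNat, ← ofReal_mul,
          ← ofReal_mul, ← ofReal_mul, norm_real, Real.norm_eq_abs, ← mul_assoc]
        exact le_abs_self _
    _ ≤ ∫ t in (-π)..π, ‖(exp (y * exp (t * I)) - 1) ^ b * exp (-(a * t * I))‖ :=
        intervalIntegral.norm_integral_le_integral_norm hpi
    _ ≤ ∫ t in (-π)..π, (Real.exp y - 1) ^ b * Real.exp (-(b * y / π ^ 2) * t ^ 2) := by
        refine intervalIntegral.integral_mono_on hpi ?_ ?_ fun t ht => ?_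
        · apply Continuous.intervalIntegrable; fun_prop
        · apply Continuous.intervalIntegrable; fun_prop
        exact norm_exp_sub_one_pow_mul_exp_neg_le hy.le (abs_le.mpr ht) a b
    _ ≤ (Real.exp y - 1) ^ b * √(π / (b * y / π ^ 2)) := by
        rw [intervalIntegral.integral_const_mul]
        have hey : 0 ≤ Real.exp y - 1 := by linarith [Real.add_one_le_exp y]
        gcongr
        exact intervalIntegral.integral_exp_neg_mul_sq_le hα hpi
    _ = 2 * π * (√π / 2 / √(y * b) * (Real.exp y - 1) ^ b) := by
        have hsqrt : √(π / (b * y / π ^ 2)) = π * (√π / √(y * b)) := by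
          rw [show π / (b * y / π ^ 2) = π ^ 2 * (π / (y * b)) by field_simp,
            Real.sqrt_mul (sq_nonneg π), Real.sqrt_sq pi_pos.le, Real.sqrt_div' _ (by positivity)]
        rw [hsqrt]
        ring

/-- There is a universal constant `C` such that for all `y > 0` and positive
integers `a, b`, the coefficient of `y^a` in `(e^y - 1)^b` is at most
`C (yb)^{-1/2} (e^y-1)^b / y^a`. -/
theorem coeff_exp_sub_one_pow_le :
    ∃ C : ℝ, 0 < C ∧ ∀ (a b : ℕ) (y : ℝ), 1 ≤ a → 1 ≤ b → 0 < y →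
      (PowerSeries.coeff (R := ℝ) a) ((PowerSeries.exp ℝ - 1) ^ b) ≤
        C / Real.sqrt (y * b) * ((Real.exp y - 1) ^ b / y ^ a) := by
  refine ⟨√π / 2, by positivity, fun a b y _ hb hy => ?_⟩
  rw [← mul_div_assoc, le_div_iff₀ (pow_pos hy a)]
  exact coeff_exp_sub_one_pow_mul_pow_le hb hy
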